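/- arXiv:math/0612443 — 4 statements merged into one kernel-verified Lean document; each statement's English description precedes it below -/
import Mathlib

section
/- Let f be a square matrix with integer entries, p a prime, and let k ≥ s ≥ 1. Then Tr(f^(p^k)) ≡ Tr(f^(p^(k−s))) (mod p^(k−s+1)). -/
/-!
`Tr (A ^ n)` is the sum over closed walks `w : ZMod n → ι` of `∏ i, A (w i) (w (i + 1))`, and
this weight is invariant under rotating the walk. For `n = p ^ (m + 1)`, every nonzero subgroup
of `ZMod n` contains `p ^ m`, so the walks without period `p ^ m` fall into free rotation orbits
of size `p ^ (m + 1)`. The walks with period `p ^ m` are the `p`-fold repetitions of walks of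
length `p ^ m`, whose weight is the `p`-th power. Together with
`a ^ p ^ (e + 1) ≡ a ^ p ^ e [ZMOD p ^ (e + 1)]`, an induction on `m` gives
`Tr (A ^ p ^ (m + 1)) ≡ Tr (A ^ p ^ m) [ZMOD p ^ (m + 1)]`, and these congruences chain together.
-/

open Finset Function

theorem Fin.sum_univ_pi_succ {ι M : Type*} [Fintype ι] [AddCommMonoid M] {n : ℕ}
    (f : (Fin (n + 1) → ι) → M) : ∑ w, f w = ∑ a, ∑ w : Fin n → ι, f (Fin.cons a w) := by
  rw [← (Fin.consEquiv fun _ ↦ ι).sum_comp, Fintype.sum_prod_type]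
  rfl

theorem AddAction.card_mul_dvd_sum_of_free {G X R : Type*} [AddGroup G] [Fintype G] [AddAction G X]
    [CommSemiring R] (s : Finset X) (hs : ∀ g : G, ∀ x ∈ s, g +ᵥ x ∈ s)
    (hfree : ∀ x ∈ s, ∀ g : G, g +ᵥ x = x → g = 0) {F : X → R}
    (hF : ∀ (g : G) x, F (g +ᵥ x) = F x) {d : R} (hd : ∀ x ∈ s, d ∣ F x) :
    (Fintype.card G : R) * d ∣ ∑ x ∈ s, F x := by
  classical
  rw [sum_partition (orbitRel G X)]
  refine dvd_sum fun q hq ↦ ?_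
  obtain ⟨x, hx, rfl⟩ := mem_image.1 hq
  have horbit :
      {y ∈ s | (⟦y⟧ : Quotient (orbitRel G X)) = ⟦x⟧} = univ.image (· +ᵥ x : G → X) := by
    ext y
    simp only [mem_filter, mem_image, mem_univ, true_and, Quotient.eq, orbitRel_apply,
      mem_orbit_iff]
    exact ⟨fun h ↦ h.2, fun ⟨g, hg⟩ ↦ ⟨hg ▸ hs g x hx, g, hg⟩⟩
  have hinj : Injective (· +ᵥ x : G → X) := fun g g' (h : g +ᵥ x = g' +ᵥ x) ↦ by
    have := hfree x hx (-g' + g) (by rw [add_vadd, h, neg_vadd_vadd])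
    rwa [neg_add_eq_zero, eq_comm] at this
  rw [horbit, sum_image hinj.injOn, sum_congr rfl fun g _ ↦ hF g x, sum_const, card_univ,
    nsmul_eq_mul]
  exact mul_dvd_mul_left _ (hd x hx)

theorem AddMonoidHom.prod_comp_of_surjective {G H M : Type*} [AddGroup G] [Fintype G]
    [AddGroup H] [Fintype H] [CommMonoid M] (π : G →+ H) (hπ : Surjective π) (g : H → M) :
    ∏ a, g (π a) = (∏ b, g b) ^ (Fintype.card G / Fintype.card H) := by
  classical
  have hfiber (b : H) : #{a | π a = b} = #{a | π a = 0} :=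
    card_fiber_eq_of_mem_range π (hπ b) ⟨0, map_zero π⟩
  have hcard : Fintype.card G = Fintype.card H * #{a | π a = 0} := by
    rw [← card_univ, card_eq_sum_card_fiberwise (f := π) (t := univ) (fun _ _ ↦ mem_univ _),
      sum_congr rfl fun b _ ↦ hfiber b, sum_const, card_univ, smul_eq_mul]
  rw [Finset.prod_comp, image_univ_of_surjective hπ, prod_congr rfl fun b _ ↦ by rw [hfiber b],
    prod_pow, hcard, Nat.mul_div_cancel_left _ Fintype.card_pos]

namespace ZMod

theorem periodic_prime_pow_of_periodic {α : Type*} {p m : ℕ} (hp : p.Prime)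
    {w : ZMod (p ^ (m + 1)) → α} {t : ZMod (p ^ (m + 1))} (h : Periodic w t) (ht : t ≠ 0) :
    Periodic w ((p ^ m : ℕ) : ZMod (p ^ (m + 1))) := by
  have : NeZero (p ^ (m + 1)) := ⟨pow_ne_zero _ hp.ne_zero⟩
  obtain ⟨i, hi, hgcd⟩ := (Nat.dvd_prime_pow hp).1 (Nat.gcd_dvd_right t.val (p ^ (m + 1)))
  have him : i ≤ m := by
    refine Nat.le_of_lt_succ (hi.lt_of_ne fun him ↦ ht ?_)
    have hdvd : p ^ i ∣ t.val := hgcd ▸ Nat.gcd_dvd_left t.val (p ^ (m + 1))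
    rw [him] at hdvd
    rw [← ZMod.val_eq_zero, Nat.eq_zero_of_dvd_of_lt hdvd t.val_lt]
  -- `t * t⁻¹ = gcd t.val (p ^ (m + 1)) = p ^ i` divides `p ^ m`.
  have hpow : ((p ^ m : ℕ) : ZMod (p ^ (m + 1))) =
      ((t⁻¹ * (p : ZMod (p ^ (m + 1))) ^ (m - i)).val : ℕ) * t := by
    rw [ZMod.natCast_zmod_val, mul_comm, ← mul_assoc, ZMod.mul_inv_eq_gcd, hgcd]
    push_cast
    rw [← pow_add, Nat.add_sub_cancel' him]
  rw [hpow]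
  exact h.nat_mul _

theorem range_comp_castHom {α : Type*} {d n : ℕ} [NeZero n] (hd : d ∣ n) :
    Set.range (fun v : ZMod d → α ↦ v ∘ ZMod.castHom hd (ZMod d)) =
      {w | Periodic w (d : ZMod n)} := by
  ext w
  constructor
  · rintro ⟨v, rfl⟩ x
    simp only [comp_apply, map_add, map_natCast, ZMod.natCast_self, add_zero]
  · intro hw
    refine ⟨fun y ↦ w (y.val : ZMod n), funext fun a ↦ ?_⟩
    have ha : a = ((a.val % d : ℕ) : ZMod n) + ((a.val / d : ℕ) : ZMod n) * d := by
      rw [← Nat.cast_mul, ← Nat.cast_add, Nat.mod_add_div', ZMod.natCast_zmod_val]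
    show w ((ZMod.castHom hd (ZMod d) a).val : ZMod n) = w a
    rw [ZMod.castHom_apply, ← ZMod.natCast_val, ZMod.val_natCast]
    conv_rhs => rw [ha]
    exact ((hw.nat_mul _) _).symm

-- Rotation of words is `arrowAddAction`: `(g +ᵥ w) i = w (-g + i)`.
attribute [local instance] arrowAddAction in
theorem prime_pow_mul_dvd_sum_sub_sum_comp_castHom {α R : Type*} [Fintype α] [CommRing R]
    {p : ℕ} [Fact p.Prime] (m : ℕ) {F : (ZMod (p ^ (m + 1)) → α) → R}
    (hF : ∀ t w, F (fun i ↦ w (t + i)) = F w) {d : R} (hd : ∀ w, d ∣ F w) :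
    (p : R) ^ (m + 1) * d ∣ ∑ w, F w -
      ∑ v : ZMod (p ^ m) → α, F (v ∘ ZMod.castHom (pow_dvd_pow p m.le_succ) _) := by
  classical
  set c : ZMod (p ^ (m + 1)) := ((p ^ m : ℕ) : ZMod (p ^ (m + 1)))
  have hperiodic : ∑ w with Periodic w c, F w =
      ∑ v : ZMod (p ^ m) → α, F (v ∘ ZMod.castHom (pow_dvd_pow p m.le_succ) _) := by
    rw [← sum_image ((ZMod.castHom_surjective _).injective_comp_right.injOn)]
    congr 1
    apply coe_injective
    rw [coe_filter_univ, coe_image, coe_univ, Set.image_univ, ZMod.range_comp_castHom]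
  have haperiodic : (p : R) ^ (m + 1) * d ∣ ∑ w with ¬ Periodic w c, F w := by
    have := AddAction.card_mul_dvd_sum_of_free (G := ZMod (p ^ (m + 1))) {w | ¬ Periodic w c} ?_ ?_
      (fun g w ↦ hF (-g) w) (fun w _ ↦ hd w)
    · rwa [ZMod.card, Nat.cast_pow] at this
    · intro g w hw
      simp only [mem_filter, mem_univ, true_and] at hw ⊢
      refine fun h ↦ hw fun x ↦ ?_
      have hx : w (-g + (g + x + c)) = w (-g + (g + x)) := h (g + x)
      rwa [add_assoc, neg_add_cancel_left, neg_add_cancel_left] at hx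
    · intro w hw g hg
      simp only [mem_filter, mem_univ, true_and] at hw
      by_contra hg0
      refine hw (periodic_prime_pow_of_periodic Fact.out (t := -g) (fun x ↦ ?_)
        (neg_ne_zero.2 hg0))
      rw [add_comm]
      exact congrFun hg x
  rw [← sum_filter_add_sum_filter_not univ (Periodic · c), hperiodic, add_sub_cancel_left]
  exact haperiodic

end ZMod

theorem Int.prime_pow_succ_dvd_pow_sub_pow {p : ℕ} (hp : p.Prime) (a : ℤ) (e : ℕ) :
    (p : ℤ) ^ (e + 1) ∣ a ^ p ^ (e + 1) - a ^ p ^ e := by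
  simpa only [← pow_mul, ← pow_succ'] using
    dvd_sub_pow_of_dvd_sub (Int.prime_dvd_pow_self_sub hp a) e

namespace Matrix

section CommSemiring

variable {ι R : Type*} [CommSemiring R]

def pathWeight (A : Matrix ι ι R) {n : ℕ} (w : Fin (n + 1) → ι) : R :=
  ∏ t : Fin n, A (w t.castSucc) (w t.succ)

theorem pathWeight_cons (A : Matrix ι ι R) {n : ℕ} (a : ι) (w : Fin (n + 1) → ι) :
    A.pathWeight (Fin.cons a w) = A a (w 0) * A.pathWeight w := by
  simp only [pathWeight, Fin.prod_univ_succ, Fin.castSucc_zero, Fin.cons_zero, Fin.cons_succ,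
    ← Fin.succ_castSucc]

theorem pathWeight_snoc (A : Matrix ι ι R) {n : ℕ} (w : Fin (n + 1) → ι) (b : ι) :
    A.pathWeight (Fin.snoc w b) = A.pathWeight w * A (w (Fin.last n)) b := by
  simp only [pathWeight, Fin.prod_univ_castSucc, Fin.snoc_castSucc, Fin.succ_last, Fin.snoc_last,
    Fin.succ_castSucc]

theorem pathWeight_snoc_head (A : Matrix ι ι R) {n : ℕ} (w : Fin (n + 1) → ι) :
    A.pathWeight (Fin.snoc w (w 0)) = ∏ t, A (w t) (w (t + 1)) := by
  rw [pathWeight_snoc, Fin.prod_univ_castSucc, Fin.last_add_one]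
  simp only [pathWeight, Fin.coeSucc_eq_succ]

-- The index `i + 1` wraps around in `ZMod n`, so `w` is a closed walk.
def cycleWeight (A : Matrix ι ι R) {n : ℕ} [NeZero n] (w : ZMod n → ι) : R :=
  ∏ i, A (w i) (w (i + 1))

theorem cycleWeight_comp_add_left (A : Matrix ι ι R) {n : ℕ} [NeZero n] (t : ZMod n)
    (w : ZMod n → ι) : A.cycleWeight (fun i ↦ w (t + i)) = A.cycleWeight w := by
  simp only [cycleWeight, ← add_assoc]
  exact Equiv.prod_comp (Equiv.addLeft t) fun i ↦ A (w i) (w (i + 1))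

theorem cycleWeight_comp_castHom (A : Matrix ι ι R) {d n : ℕ} [NeZero d] [NeZero n]
    (hd : d ∣ n) (v : ZMod d → ι) :
    A.cycleWeight (v ∘ ZMod.castHom hd (ZMod d)) = A.cycleWeight v ^ (n / d) := by
  have := (ZMod.castHom hd (ZMod d)).toAddMonoidHom.prod_comp_of_surjective
    (ZMod.castHom_surjective hd) fun i ↦ A (v i) (v (i + 1))
  simp only [RingHom.toAddMonoidHom_eq_coe, AddMonoidHom.coe_coe, ZMod.card] at this
  simpa only [cycleWeight, Function.comp_apply, map_add, map_one] using this

variable [Fintype ι] [DecidableEq ι]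

theorem pow_succ_apply_eq_sum_pathWeight (A : Matrix ι ι R) (n : ℕ) (i j : ι) :
    (A ^ (n + 1)) i j = ∑ w : Fin n → ι, A.pathWeight (Fin.cons i (Fin.snoc w j)) := by
  induction n generalizing i with
  | zero => simp [pathWeight, Fin.snoc]
  | succ n ih =>
    rw [pow_succ', mul_apply]
    simp only [ih, mul_sum, Fin.sum_univ_pi_succ (n := n),
      ← Fin.cons_snoc_eq_snoc_cons, pathWeight_cons (n := n + 1), Fin.cons_zero]

theorem trace_pow_succ_eq_sum (A : Matrix ι ι R) (n : ℕ) :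
    (A ^ (n + 1)).trace = ∑ w : Fin (n + 1) → ι, ∏ t, A (w t) (w (t + 1)) := by
  simp only [trace, diag_apply, pow_succ_apply_eq_sum_pathWeight, Fin.sum_univ_pi_succ (n := n),
    Fin.cons_snoc_eq_snoc_cons, ← pathWeight_snoc_head, Fin.cons_zero]

theorem trace_pow_eq_sum_cycleWeight (A : Matrix ι ι R) (n : ℕ) [NeZero n] :
    (A ^ n).trace = ∑ w : ZMod n → ι, A.cycleWeight w := by
  obtain ⟨n, rfl⟩ := Nat.exists_eq_succ_of_ne_zero (NeZero.ne n)
  -- `ZMod (n + 1)` is `Fin (n + 1)` by definition.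
  exact trace_pow_succ_eq_sum A n

end CommSemiring

variable {ι : Type*} [Fintype ι] {p : ℕ} [Fact p.Prime]

theorem prime_pow_dvd_sum_cycleWeight_pow_sub (A : Matrix ι ι ℤ) (m e : ℕ) :
    (p : ℤ) ^ (m + e + 1) ∣
      ∑ w : ZMod (p ^ m) → ι, (A.cycleWeight w ^ p ^ (e + 1) - A.cycleWeight w ^ p ^ e) := by
  induction m generalizing e with
  | zero =>
    rw [zero_add]
    exact dvd_sum fun w _ ↦ Int.prime_pow_succ_dvd_pow_sub_pow Fact.out _ e
  | succ m ih =>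
    have hnecklace := ZMod.prime_pow_mul_dvd_sum_sub_sum_comp_castHom (p := p) m
      (F := fun w ↦ A.cycleWeight w ^ p ^ (e + 1) - A.cycleWeight w ^ p ^ e)
      (fun t w ↦ by simp only [cycleWeight_comp_add_left])
      (fun w ↦ Int.prime_pow_succ_dvd_pow_sub_pow Fact.out _ e)
    simp only [cycleWeight_comp_castHom, Nat.pow_div (m.le_add_right 1) (Fact.out : p.Prime).pos,
      Nat.add_sub_cancel_left, pow_one, ← pow_mul, ← pow_succ'] at hnecklace
    have hshort := ih (e + 1)
    rw [show m + (e + 1) + 1 = m + 1 + (e + 1) by omega, pow_add] at hshort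
    rw [show m + 1 + e + 1 = m + 1 + (e + 1) by omega, pow_add]
    simpa only [sub_add_cancel] using dvd_add hnecklace hshort

theorem prime_pow_dvd_trace_pow_sub [DecidableEq ι] (A : Matrix ι ι ℤ) (m : ℕ) :
    (p : ℤ) ^ (m + 1) ∣ (A ^ p ^ (m + 1)).trace - (A ^ p ^ m).trace := by
  have hnecklace := ZMod.prime_pow_mul_dvd_sum_sub_sum_comp_castHom (p := p) m
    (F := A.cycleWeight) (cycleWeight_comp_add_left A) (fun _ ↦ one_dvd _)
  simp only [mul_one, cycleWeight_comp_castHom,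
    Nat.pow_div (m.le_add_right 1) (Fact.out : p.Prime).pos, Nat.add_sub_cancel_left,
    pow_one] at hnecklace
  rw [trace_pow_eq_sum_cycleWeight, trace_pow_eq_sum_cycleWeight,
    ← sub_add_sub_cancel _ (∑ v : ZMod (p ^ m) → ι, A.cycleWeight v ^ p)]
  refine dvd_add hnecklace ?_
  simpa only [← sum_sub_distrib, zero_add, pow_zero, pow_one] using
    prime_pow_dvd_sum_cycleWeight_pow_sub A m 0

theorem trace_pow_prime_pow_modEq [DecidableEq ι] (A : Matrix ι ι ℤ) {l j : ℕ} (hlj : l ≤ j) :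
    (A ^ p ^ j).trace ≡ (A ^ p ^ l).trace [ZMOD (p : ℤ) ^ (l + 1)] := by
  induction j, hlj using Nat.le_induction with
  | base => rfl
  | succ j hlj ih =>
    refine Int.ModEq.trans (Int.ModEq.symm (Int.modEq_iff_dvd.2 ?_)) ih
    exact (pow_dvd_pow _ (by omega)).trans (prime_pow_dvd_trace_pow_sub A j)

end Matrix

theorem stmt_2_general (r : ℕ) (f : Matrix (Fin r) (Fin r) ℤ)
    (p : ℕ) (hp : p.Prime) (k s : ℕ) :
    (f ^ (p ^ k)).trace ≡ (f ^ (p ^ (k - s))).trace [ZMOD (p : ℤ) ^ (k - s + 1)] := by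
  have : Fact p.Prime := ⟨hp⟩
  exact f.trace_pow_prime_pow_modEq (k.sub_le s)

theorem stmt_2 (r : ℕ) (f : Matrix (Fin r) (Fin r) ℤ)
    (p : ℕ) (hp : p.Prime) (k s : ℕ) (hs : 1 ≤ s) (hsk : s ≤ k) :
    (f ^ (p ^ k)).trace ≡ (f ^ (p ^ (k - s))).trace [ZMOD (p : ℤ) ^ (k - s + 1)] :=
  stmt_2_general r f p hp k s
end

section
/- Let M be a square matrix of finite order over ℂ (i.e. M^m = 1 for some m ≥ 1) such that Tr(M^n) is an integer for every n ≥ 1. Then every coefficient of the characteristic polynomial of M is an integer. -/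
/-!
The roots `λᵢ` of the characteristic polynomial of a matrix `A` over an algebraically closed
field satisfy `det (p A) = ∏ p λᵢ` for every polynomial `p`, hence `charpoly (p A) = ∏ (X - p λᵢ)`
and `Tr (Aⁿ) = ∑ λᵢⁿ`. For `M` with `M ^ m = 1` the `λᵢ` are roots of unity, so the coefficients of
`charpoly M`, which are up to sign the elementary symmetric functions of the `λᵢ`, are algebraic
integers. Newton's identities express these elementary symmetric functions rationally through the
power sums `∑ λᵢⁿ = Tr (Mⁿ) ∈ ℤ`, so they are also rational, hence integers.
-/

open Polynomial Finset

namespace Matrix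

variable {n K : Type*} [Fintype n] [DecidableEq n] [Field K] [IsAlgClosed K] (A : Matrix n n K)

theorem card_roots_charpoly : Multiset.card A.charpoly.roots = Fintype.card n := by
  rw [← A.charpoly_natDegree_eq_dim, (IsAlgClosed.splits A.charpoly).natDegree_eq_card_roots]

theorem det_sub_scalar_eq_prod_roots_charpoly (μ : K) :
    (A - scalar n μ).det = (A.charpoly.roots.map (· - μ)).prod := by
  rw [← neg_sub, det_neg, ← eval_charpoly,
    (IsAlgClosed.splits A.charpoly).eval_eq_prod_roots_of_monic A.charpoly_monic,
    ← A.card_roots_charpoly, ← Multiset.card_map (μ - ·),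
    ← Multiset.prod_map_neg, Multiset.map_map]
  simp

theorem det_aeval_eq_prod_roots_charpoly (p : K[X]) :
    (aeval A p).det = (A.charpoly.roots.map p.eval).prod := by
  -- both sides are multiplicative in `p`, so it suffices to compare them on the factors of `p`
  let φ : K[X] →* K := detMonoidHom.comp (aeval A : K[X] →ₐ[K] Matrix n n K).toMonoidHom
  have hφ (q : K[X]) : φ q = (aeval A q).det := rfl
  have hsplit := IsAlgClosed.splits p
  conv_lhs => rw [← hφ, hsplit.eq_prod_roots, map_mul, map_multiset_prod, Multiset.map_map]
  simp only [hsplit.eval_eq_prod_roots, Multiset.prod_map_mul, Multiset.map_const',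
    Multiset.prod_replicate, card_roots_charpoly, Function.comp_def, hφ]
  rw [Multiset.prod_map_prod_map]
  congr 1
  · simp [aeval_C, algebraMap_eq_diagonal, det_diagonal]
  · refine congrArg _ (Multiset.map_congr rfl fun μ _ => ?_)
    rw [← det_sub_scalar_eq_prod_roots_charpoly, map_sub, aeval_X, aeval_C]
    rfl

theorem charpoly_aeval_eq_prod_roots_charpoly (p : K[X]) :
    (aeval A p).charpoly = ((A.charpoly.roots.map p.eval).map (X - C ·)).prod := by
  refine Polynomial.funext fun x => ?_
  have : scalar n x - aeval A p = aeval A (C x - p) := by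
    rw [map_sub, aeval_C]; rfl
  rw [eval_charpoly, this, det_aeval_eq_prod_roots_charpoly, eval_multiset_prod, Multiset.map_map,
    Multiset.map_map]
  simp [Function.comp_def]

theorem roots_charpoly_aeval (p : K[X]) :
    (aeval A p).charpoly.roots = A.charpoly.roots.map p.eval := by
  rw [charpoly_aeval_eq_prod_roots_charpoly, roots_multiset_prod_X_sub_C]

theorem trace_pow_eq_sum_roots_charpoly_pow (k : ℕ) :
    (A ^ k).trace = (A.charpoly.roots.map (· ^ k)).sum := by
  simpa [trace_eq_sum_roots_charpoly] using congrArg Multiset.sum (A.roots_charpoly_aeval (X ^ k))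

theorem pow_eq_one_of_mem_roots_charpoly {m : ℕ} (hA : A ^ m = 1) {μ : K}
    (hμ : μ ∈ A.charpoly.roots) : μ ^ m = 1 := by
  have hmem : μ ^ m ∈ (aeval A (X ^ m : K[X])).charpoly.roots := by
    rw [roots_charpoly_aeval]
    exact Multiset.mem_map.2 ⟨μ, hμ, by simp⟩
  rw [map_pow, aeval_X, hA, charpoly_one] at hmem
  have hroot := isRoot_of_mem_roots hmem
  rw [IsRoot.def, eval_pow, eval_sub, eval_X, eval_one] at hroot
  exact sub_eq_zero.1 (eq_zero_of_pow_eq_zero hroot)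

end Matrix

theorem Multiset.mul_esymm_eq_sum {R : Type*} [CommRing R] (s : Multiset R) (k : ℕ) :
    k * s.esymm k = (-1) ^ (k + 1) *
      ∑ a ∈ HasAntidiagonal.antidiagonal k with a.1 < k,
        (-1) ^ a.1 * s.esymm a.1 * (s.map (· ^ a.2)).sum := by
  classical
  let f : s → R := (↑)
  have hf : univ.val.map f = s := s.map_univ_coe
  have hpsum (j : ℕ) : MvPolynomial.aeval f (MvPolynomial.psum s R j) = (s.map (· ^ j)).sum := by
    simp only [MvPolynomial.psum, _root_.map_sum, _root_.map_pow, MvPolynomial.aeval_X]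
    conv_rhs => rw [← hf, Multiset.map_map]
    rfl
  have h := congrArg (MvPolynomial.aeval f) (MvPolynomial.mul_esymm_eq_sum s R k)
  simpa only [_root_.map_mul, map_natCast, _root_.map_pow, _root_.map_neg, _root_.map_one,
    _root_.map_sum, MvPolynomial.aeval_esymm_eq_multiset_esymm, hf, hpsum] using h

theorem Multiset.esymm_mem_of_forall_psum_mem {K S : Type*} [Field K] [CharZero K] [SetLike S K]
    [SubfieldClass S K] {F : S} {s : Multiset K} (hs : ∀ j, 0 < j → (s.map (· ^ j)).sum ∈ F)
    (k : ℕ) : s.esymm k ∈ F := by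
  induction k using Nat.strong_induction_on with
  | _ k ih =>
    rcases k.eq_zero_or_pos with rfl | hk
    · simp [esymm]
    have hmul : (k : K) * s.esymm k ∈ F := by
      rw [mul_esymm_eq_sum]
      refine mul_mem (pow_mem (neg_mem (one_mem F)) _) (sum_mem fun a ha => ?_)
      rw [Finset.mem_filter, Finset.HasAntidiagonal.mem_antidiagonal] at ha
      exact mul_mem (mul_mem (pow_mem (neg_mem (one_mem F)) _) (ih _ ha.2)) (hs _ (by omega))
    simpa [hk.ne'] using mul_mem (inv_mem (natCast_mem F k)) hmul

theorem Multiset.coeff_prod_X_sub_C_mem {R S : Type*} [CommRing R] [SetLike S R]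
    [SubringClass S R] {T : S} {s : Multiset R} (hs : ∀ k, s.esymm k ∈ T) (i : ℕ) :
    (s.map (X - C ·)).prod.coeff i ∈ T := by
  nontriviality R
  rcases le_or_gt i (card s) with hi | hi
  · rw [prod_X_sub_C_coeff s hi]
    exact mul_mem (pow_mem (neg_mem (one_mem T)) _) (hs _)
  · rw [coeff_eq_zero_of_natDegree_lt (by rwa [natDegree_multiset_prod_X_sub_C_eq_card])]
    exact zero_mem T

theorem exists_int_eq_of_isIntegral_of_mem_fieldRange {K : Type*} [Field K] [CharZero K] {x : K}
    (hint : IsIntegral ℤ x) (hrat : x ∈ (algebraMap ℚ K).fieldRange) : ∃ z : ℤ, x = z := by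
  obtain ⟨q, rfl⟩ := hrat
  obtain ⟨z, rfl⟩ := IsIntegrallyClosed.isIntegral_iff.1
    ((isIntegral_algebraMap_iff (algebraMap ℚ K).injective).1 hint)
  exact ⟨z, by simp⟩

theorem stmt_5 (r : ℕ) (M : Matrix (Fin r) (Fin r) ℂ)
    (hfin : ∃ m : ℕ, 1 ≤ m ∧ M ^ m = 1)
    (htr : ∀ n : ℕ, 1 ≤ n → ∃ z : ℤ, (M ^ n).trace = (z : ℂ)) :
    ∀ i : ℕ, ∃ z : ℤ, M.charpoly.coeff i = (z : ℂ) := by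
  obtain ⟨m, hm, hMm⟩ := hfin
  have hroots_integral (μ : ℂ) (hμ : M.charpoly.IsRoot μ) : IsIntegral ℤ μ := by
    refine IsIntegral.of_pow hm ?_
    rw [M.pow_eq_one_of_mem_roots_charpoly hMm ((mem_roots M.charpoly_monic.ne_zero).2 hμ)]
    exact isIntegral_one
  have hpsum_rat (j : ℕ) (hj : 0 < j) :
      (M.charpoly.roots.map (· ^ j)).sum ∈ (algebraMap ℚ ℂ).fieldRange := by
    obtain ⟨z, hz⟩ := htr j hj
    exact ⟨z, by simp [← M.trace_pow_eq_sum_roots_charpoly_pow, hz]⟩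
  intro i
  refine exists_int_eq_of_isIntegral_of_mem_fieldRange ?_ ?_
  · exact isIntegral_coeff_of_factors _ (by simp [M.charpoly_monic.leadingCoeff, isIntegral_one])
      (IsAlgClosed.splits _) hroots_integral i
  · rw [(IsAlgClosed.splits M.charpoly).eq_prod_roots_of_monic M.charpoly_monic]
    exact Multiset.coeff_prod_X_sub_C_mem (Multiset.esymm_mem_of_forall_psum_mem hpsum_rat) i
end

section
/- Let f be a square matrix with integer entries, p a prime, and k ≥ 1. Then the characteristic polynomials of f^(p^k) and of f^(p^(k−1)) are congruent coefficient-wise modulo p^k: for every i, the coefficient of t^i in the characteristic polynomial of f^(p^k) is congruent modulo p^k to the coefficient of t^i in the characteristic polynomial of f^(p^(k−1))). -/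
/-!
Over an algebraic closure of `ℚ` the eigenvalues `λ` of `f` are algebraic integers, and a fixed
coefficient of the characteristic polynomial of `f ^ N` is `G (λ ^ N)` for an integer polynomial
`G` independent of `N`. As `X ↦ X ^ p` is a Frobenius lift on `ℤ[X]`, Dwork's construction writes
`G (X ^ p ^ n) = ∑_{i ≤ n} p ^ i * w i ^ p ^ (n - i)`. The algebraic integers `c i = w i (λ)` then
have rational integer ghost components, so inductively each `c i` is a rational integer, and
Fermat's little theorem makes consecutive ghost components congruent modulo `p ^ (n + 1)`.
-/

section Eigenvalues

open Polynomial

theorem Polynomial.coeff_prod_X_sub_C_eq_aeval {σ R : Type*} [Fintype σ] [CommRing R]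
    (g : σ → R) (j : ℕ) :
    (∏ i, (X - C (g i))).coeff j =
      MvPolynomial.aeval g ((∏ i, (X - C (MvPolynomial.X i : MvPolynomial σ ℤ))).coeff j) := by
  rw [← AlgHom.coe_toRingHom, ← coeff_map, Polynomial.map_prod]
  simp

namespace Matrix

theorem isIntegral_of_mem_roots_charpoly_map {R A n : Type*} [CommRing R] [CommRing A]
    [IsDomain A] [Algebra R A] [Fintype n] [DecidableEq n] (M : Matrix n n R) {x : A}
    (hx : x ∈ (M.map (algebraMap R A)).charpoly.roots) : IsIntegral R x :=
  ⟨M.charpoly, M.charpoly_monic, by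
    rw [eval₂_eq_eval_map, ← charpoly_map]
    exact isRoot_of_mem_roots hx⟩

variable {K n : Type*} [Field K] [IsAlgClosed K] [Fintype n] [DecidableEq n]

theorem card_roots_charpoly_s7 (M : Matrix n n K) :
    Multiset.card M.charpoly.roots = Fintype.card n := by
  rw [IsAlgClosed.card_roots_eq_natDegree, charpoly_natDegree_eq_dim]

theorem det_sub_scalar_eq_prod_roots (M : Matrix n n K) (s : K) :
    (M - scalar n s).det = (M.charpoly.roots.map (· - s)).prod := by
  have hsplit := C_leadingCoeff_mul_prod_multiset_X_sub_C
    (IsAlgClosed.card_roots_eq_natDegree (p := M.charpoly))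
  rw [(charpoly_monic M).leadingCoeff, C_1, one_mul] at hsplit
  have heval : M.charpoly.eval s = (M.charpoly.roots.map (s - ·)).prod := by
    conv_lhs => rw [← hsplit]
    simp [eval_multiset_prod]
  rw [← neg_sub, det_neg, ← eval_charpoly, heval, ← card_roots_charpoly_s7 M,
    ← Multiset.card_map (s - ·), ← Multiset.prod_map_neg, Multiset.map_map]
  simp

theorem det_aeval_eq_prod_roots_eval (M : Matrix n n K) (q : K[X]) :
    (aeval M q).det = (M.charpoly.roots.map fun a => q.eval a).prod := by
  -- with `q = c * ∏ₛ (X - s)`, both sides are `c ^ card n * ∏ₛ ∏ₐ (a - s)`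
  let D : K[X] →* K := detMonoidHom.comp (aeval (R := K) M).toRingHom.toMonoidHom
  have hD (s : K) : D (X - C s) = (M.charpoly.roots.map (· - s)).prod := by
    simp [D, ← det_sub_scalar_eq_prod_roots, algebraMap_eq_diagonal, scalar_apply,
      Pi.algebraMap_def]
  have hq := C_leadingCoeff_mul_prod_multiset_X_sub_C (IsAlgClosed.card_roots_eq_natDegree (p := q))
  change D q = _
  conv_lhs => rw [← hq]
  rw [map_mul, map_multiset_prod, Multiset.map_map]
  simp only [Function.comp_def, hD]
  rw [Multiset.prod_map_prod_map]
  conv_rhs => rw [← hq]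
  simp [D, eval_multiset_prod, Multiset.prod_map_mul, card_roots_charpoly_s7, algebraMap_eq_diagonal,
    Pi.algebraMap_def]

theorem charpoly_pow_eq_prod_roots (M : Matrix n n K) (k : ℕ) :
    (M ^ k).charpoly = (M.charpoly.roots.map fun a => X - C (a ^ k)).prod := by
  refine Polynomial.funext fun t => ?_
  have : scalar n t - M ^ k = aeval M (C t - X ^ k) := by
    simp [algebraMap_eq_diagonal, scalar_apply]
  rw [eval_charpoly, this, det_aeval_eq_prod_roots_eval, eval_multiset_prod, Multiset.map_map]
  simp

theorem coeff_charpoly_pow_eq_aeval [DecidableEq K] (M : Matrix n n K) (N j : ℕ) :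
    (M ^ N).charpoly.coeff j = MvPolynomial.aeval (fun x : M.charpoly.roots => (x : K) ^ N)
      ((∏ x : M.charpoly.roots, (X - C (MvPolynomial.X x : MvPolynomial _ ℤ))).coeff j) := by
  rw [charpoly_pow_eq_prod_roots, ← coeff_prod_X_sub_C_eq_aeval, Finset.prod_eq_multiset_prod,
    Multiset.map_univ _ fun a => X - C (a ^ N)]

end Matrix

end Eigenvalues

section GhostComponents

open MvPolynomial Finset

variable {A : Type*} [CommRing A]

def IsFrobeniusLift (p : ℕ) (ψ : A →+* A) : Prop :=
  ∀ x, (p : A) ∣ x ^ p - ψ x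

theorem pow_dvd_aeval_wittPolynomial_succ_sub {p : ℕ} {ψ : A →+* A} (hψ : IsFrobeniusLift p ψ)
    (w : ℕ → A) (m : ℕ) :
    (p : A) ^ (m + 1) ∣
      aeval w (wittPolynomial p ℤ (m + 1)) - ψ (aeval w (wittPolynomial p ℤ m)) := by
  simp only [aeval_wittPolynomial, map_sum, map_mul, map_pow, map_natCast]
  rw [sum_range_succ, add_sub_right_comm, ← sum_sub_distrib, Nat.sub_self, pow_zero, pow_one]
  refine dvd_add (dvd_sum fun i hi => ?_) (dvd_mul_right _ _)
  have hi : i ≤ m := Nat.lt_succ_iff.mp (mem_range.mp hi)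
  have key := dvd_sub_pow_of_dvd_sub (hψ (w i)) (m - i)
  rw [← pow_mul, ← pow_succ', ← Nat.sub_add_comm hi] at key
  rw [← mul_sub]
  have h := mul_dvd_mul_left ((p : A) ^ i) key
  rwa [← pow_add, Nat.add_sub_cancel' (by omega)] at h

theorem aeval_wittPolynomial_sub_aeval_wittPolynomial (p : ℕ) {w w' : ℕ → A} {n : ℕ}
    (h : ∀ i < n, w' i = w i) :
    aeval w' (wittPolynomial p ℤ n) - aeval w (wittPolynomial p ℤ n) = p ^ n * (w' n - w n) := by
  simp only [aeval_wittPolynomial, sum_range_succ, Nat.sub_self, pow_zero, pow_one]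
  rw [sum_congr rfl fun i hi => by rw [h i (mem_range.mp hi)]]
  ring

theorem exists_aeval_wittPolynomial_eq_iterate {p : ℕ} {ψ : A →+* A} (hψ : IsFrobeniusLift p ψ)
    (x : A) (K : ℕ) : ∃ w : ℕ → A, ∀ n ≤ K, aeval w (wittPolynomial p ℤ n) = ψ^[n] x := by
  induction K with
  | zero => exact ⟨fun _ => x, fun n hn => by simp [Nat.le_zero.mp hn, wittPolynomial_zero]⟩
  | succ K ih =>
    obtain ⟨w, hw⟩ := ih
    obtain ⟨d, hd⟩ := pow_dvd_aeval_wittPolynomial_succ_sub hψ w K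
    refine ⟨Function.update w (K + 1) (w (K + 1) - d), fun n hn => ?_⟩
    have hsub := aeval_wittPolynomial_sub_aeval_wittPolynomial p (n := n)
      (w := w) (w' := Function.update w (K + 1) (w (K + 1) - d))
      fun i hi => Function.update_of_ne (by omega) _ _
    rcases hn.lt_or_eq with hn | rfl
    · rw [Function.update_of_ne (by omega), sub_self, mul_zero, sub_eq_zero] at hsub
      rw [hsub, hw n (by omega)]
    · rw [Function.update_self] at hsub
      rw [Function.iterate_succ_apply', ← hw K le_rfl]
      linear_combination hsub + hd

theorem exists_intCast_eq_of_isIntegral_of_mul_eq {L : Type*} [Field L] [CharZero L] {x : L}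
    (hx : IsIntegral ℤ x) {d : ℕ} (hd : d ≠ 0) {N : ℤ} (h : (d : L) * x = N) :
    ∃ z : ℤ, x = z := by
  have hx' : x = algebraMap ℚ L (N / d) := by
    rw [map_div₀, map_intCast, map_natCast, ← h, mul_div_cancel_left₀ _ (by exact_mod_cast hd)]
  rw [hx', isIntegral_algebraMap_iff (algebraMap ℚ L).injective,
    IsIntegrallyClosed.isIntegral_iff] at hx
  obtain ⟨z, hz⟩ := hx
  exact ⟨z, by rw [hx', ← hz, eq_intCast, map_intCast]⟩

theorem exists_intCast_eq_of_aeval_wittPolynomial_eq {L : Type*} [Field L] [CharZero L] {p : ℕ}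
    (hp : p ≠ 0) {c : ℕ → L} (hc : ∀ i, IsIntegral ℤ (c i)) {a : ℕ → ℤ} {K : ℕ}
    (ha : ∀ n ≤ K, aeval c (wittPolynomial p ℤ n) = a n) : ∀ i ≤ K, ∃ z : ℤ, c i = z := by
  intro i
  induction i using Nat.strong_induction_on with
  | _ i ih =>
    intro hi
    choose! z hz using fun j (hj : j < i) => ih j hj (by omega)
    refine exists_intCast_eq_of_isIntegral_of_mul_eq (hc i) (pow_ne_zero i hp)
      (N := a i - ∑ j ∈ range i, (p : ℤ) ^ j * z j ^ p ^ (i - j)) ?_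
    push_cast
    rw [← ha i hi, aeval_wittPolynomial, sum_range_succ, Nat.sub_self, pow_zero, pow_one,
      sum_congr rfl fun j hj => by rw [hz j (mem_range.mp hj)]]
    ring

namespace MvPolynomial

variable {σ : Type*}

theorem isFrobeniusLift_expand (p : ℕ) [Fact p.Prime] :
    IsFrobeniusLift p (expand p : MvPolynomial σ ℤ →ₐ[ℤ] MvPolynomial σ ℤ).toRingHom := by
  intro φ
  rw [← C_eq_coe_nat, C_dvd_iff_zmod]
  simp [map_expand, expand_zmod]

theorem iterate_expand {R : Type*} [CommSemiring R] (p n : ℕ) (φ : MvPolynomial σ R) :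
    (expand p)^[n] φ = expand (p ^ n) φ := by
  induction n with
  | zero => simp
  | succ n ih => rw [Function.iterate_succ_apply', ih, pow_succ', expand_mul]

end MvPolynomial

theorem pow_dvd_sub_of_aeval_pow_eq_intCast {L σ : Type*} [Field L] [CharZero L] {p : ℕ}
    (hp : p.Prime) {e : σ → L} (he : ∀ i, IsIntegral ℤ (e i)) (G : MvPolynomial σ ℤ) {a : ℕ → ℤ}
    (ha : ∀ n, aeval (e ^ p ^ n) G = a n) (m : ℕ) : (p : ℤ) ^ (m + 1) ∣ a (m + 1) - a m := by
  have := Fact.mk hp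
  obtain ⟨w, hw⟩ := exists_aeval_wittPolynomial_eq_iterate (isFrobeniusLift_expand p) G (m + 1)
  change ∀ n ≤ m + 1, _ = (expand p)^[n] G at hw
  set c : ℕ → L := fun i => aeval e (w i)
  have hc (i : ℕ) : IsIntegral ℤ (c i) := by
    have hmem : c i ∈ Algebra.adjoin ℤ (Set.range e) :=
      aeval_range (R := ℤ) e ▸ AlgHom.mem_range_self _ _
    exact Algebra.adjoin_le (S := integralClosure ℤ L) (Set.range_subset_iff.2 he) hmem
  have hca : ∀ n ≤ m + 1, aeval c (wittPolynomial p ℤ n) = a n := by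
    intro n hn
    rw [← ha n, ← aeval_expand, ← iterate_expand, ← hw n hn]
    exact (comp_aeval_apply w (aeval e) _).symm
  choose! z hz using exists_intCast_eq_of_aeval_wittPolynomial_eq hp.ne_zero hc hca
  have hza : ∀ n ≤ m + 1, aeval z (wittPolynomial p ℤ n) = a n := by
    intro n hn
    apply Int.cast_injective (α := L)
    rw [← hca n hn, aeval_wittPolynomial, aeval_wittPolynomial]
    push_cast
    exact sum_congr rfl fun i hi => by rw [hz i (by have := mem_range.mp hi; omega)]
  have hid : IsFrobeniusLift p (RingHom.id ℤ) := Int.prime_dvd_pow_self_sub hp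
  simpa [hza] using pow_dvd_aeval_wittPolynomial_succ_sub hid z m

end GhostComponents

theorem stmt_7 (r : ℕ) (f : Matrix (Fin r) (Fin r) ℤ)
    (p : ℕ) (hp : p.Prime) (k : ℕ) (hk : 1 ≤ k) :
    ∀ i : ℕ, (f ^ (p ^ k)).charpoly.coeff i ≡ (f ^ (p ^ (k - 1))).charpoly.coeff i
      [ZMOD (p : ℤ) ^ k] := by
  classical
  intro j
  obtain ⟨m, rfl⟩ : ∃ m, k = m + 1 := ⟨k - 1, by omega⟩
  let fL := f.map (algebraMap ℤ (AlgebraicClosure ℚ))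
  have hcast (N : ℕ) :
      ((f ^ N).charpoly.coeff j : AlgebraicClosure ℚ) = (fL ^ N).charpoly.coeff j := by
    rw [← eq_intCast (algebraMap ℤ (AlgebraicClosure ℚ)), ← Polynomial.coeff_map, ← Matrix.charpoly_map,
      Matrix.map_pow]
  have hdvd := pow_dvd_sub_of_aeval_pow_eq_intCast hp
    (fun x => f.isIntegral_of_mem_roots_charpoly_map (Multiset.coe_mem (x := x))) _
    (fun n => (fL.coeff_charpoly_pow_eq_aeval (p ^ n) j).symm.trans (hcast _).symm) m
  exact (Int.modEq_iff_dvd.mpr hdvd).symm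
end

section
/- Let f be a square matrix with integer entries, and set b_n = Tr(f^n) for n ≥ 1. Then for every n ≥ 1 and every prime p dividing n, writing k for the exponent of p in n (so n = m·p^k with p ∤ m and k ≥ 1), we have b_n ≡ b_(n/p) (mod p^k). -/
/-!
Write `n = m * p ^ (j + 1)`, so that with `A = f ^ m` the claim reads
`Tr (A ^ p ^ (j + 1)) ≡ Tr (A ^ p ^ j) [ZMOD p ^ (j + 1)]`.

`Tr (A ^ N)` is the sum, over closed walks `v : ZMod N → ι`, of the product of the entries of `A`
along `v`, and rotating a walk does not change its weight. For `N = p ^ (j + 1)` every subgroup of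
`ZMod N` other than `⊥` contains `p ^ j`, so a walk either has a free orbit, contributing a multiple
of `p ^ (j + 1)`, or is `p ^ j`-periodic, i.e. a walk of length `p ^ j` run `p` times. The periodic
walks therefore contribute `Tr (A⁽ᵖ⁾ ^ p ^ j)`, where `A⁽ᵖ⁾` is the entrywise `p`-th power of `A`.

By Fermat `A⁽ᵖ⁾ ≡ A` mod `p`, and the same decomposition, together with
`a ≡ b [ZMOD m] → a ^ p ≡ b ^ p [ZMOD p * m]` for `p ∣ m`, shows by induction on `j` that
entrywise congruent matrices mod `m` have `Tr (· ^ p ^ j)` congruent mod `p ^ j * m`.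
-/

open Finset

theorem Int.ModEq.pow_mul_of_dvd {a b m : ℤ} {n : ℕ} (hn : (n : ℤ) ∣ m) (h : a ≡ b [ZMOD m]) :
    a ^ n ≡ b ^ n [ZMOD n * m] := by
  rw [Int.modEq_iff_dvd] at h ⊢
  rw [← geom_sum₂_mul]
  exact mul_dvd_mul (dvd_geom_sum₂_self (hn.trans h)) h

namespace AddAction

variable {G α R : Type*} [AddGroup G] [AddAction G α]

theorem stabilizer_vadd_eq_bot_iff (g : G) (x : α) :
    stabilizer G (g +ᵥ x) = ⊥ ↔ stabilizer G x = ⊥ := by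
  rw [stabilizer_vadd_eq_stabilizer_map_addConj]
  exact AddSubgroup.map_eq_bot_iff_of_injective _ (AddAut.addConj g).injective

open scoped Classical in
theorem natCard_mul_dvd_sum_of_stabilizer_eq_bot [Finite G] [Fintype α] [CommSemiring R]
    {F : α → R} (hF : ∀ (g : G) x, F (g +ᵥ x) = F x) {d : R}
    (hd : ∀ x, stabilizer G x = ⊥ → d ∣ F x) :
    (Nat.card G : R) * d ∣ ∑ x with stabilizer G x = ⊥, F x := by
  rw [sum_filter, ← (selfEquivSigmaOrbits G α).symm.sum_comp, Fintype.sum_sigma]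
  refine dvd_sum fun ω _ => ?_
  set x := ω.out
  have horbit (y : orbit G x) : (if stabilizer G (y : α) = ⊥ then F y else 0) =
      if stabilizer G x = ⊥ then F x else 0 := by
    obtain ⟨_, g, rfl⟩ := y
    simp only [stabilizer_vadd_eq_bot_iff, hF]
  simp only [show ∀ y, (selfEquivSigmaOrbits G α).symm ⟨ω, y⟩ = y from fun _ => rfl, horbit,
    sum_const, card_univ, nsmul_eq_mul]
  split_ifs with hx
  · rw [Fintype.card_eq_nat_card, Nat.card_coe_set_eq, ← index_stabilizer, hx,
      AddSubgroup.index_bot]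
    exact mul_dvd_mul_left _ (hd x hx)
  · simp

end AddAction

instance DomAddAct.instFinite {M : Type*} [Finite M] : Finite Mᵈᵃᵃ := .of_equiv _ DomAddAct.mk

namespace ZMod

open AddAction

variable {M N : ℕ}

theorem card_filter_castHom_eq [NeZero N] (h : M ∣ N) (t : ZMod M) :
    #{i : ZMod N | castHom h (ZMod M) i = t} = N / M := by
  have : NeZero M := ⟨fun hM => NeZero.ne N (Nat.eq_zero_of_zero_dvd (hM ▸ h))⟩
  have hfiber (s : ZMod M) : #{i : ZMod N | castHom h (ZMod M) i = s} =
      #{i : ZMod N | castHom h (ZMod M) i = t} :=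
    AddMonoidHom.card_fiber_eq_of_mem_range (castHom h (ZMod M)).toAddMonoidHom
      (castHom_surjective h s) (castHom_surjective h t)
  have hcard := card_eq_sum_card_fiberwise (f := castHom h (ZMod M)) (s := univ) (t := univ)
    fun _ _ => mem_univ _
  simp only [hfiber, sum_const, card_univ, ZMod.card, smul_eq_mul] at hcard
  exact (Nat.div_eq_of_eq_mul_right (Nat.pos_of_neZero M) hcard).symm

theorem prod_comp_castHom {β : Type*} [CommMonoid β] [NeZero N] [NeZero M] (h : M ∣ N)
    (g : ZMod M → β) : ∏ i : ZMod N, g (castHom h (ZMod M) i) = (∏ t, g t) ^ (N / M) := by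
  rw [prod_comp, image_univ_of_surjective (castHom_surjective h), ← prod_pow]
  simp only [card_filter_castHom_eq]

theorem exists_eq_zsmul_add_of_castHom_eq (h : M ∣ N) {x y : ZMod N}
    (hxy : castHom h (ZMod M) x = castHom h (ZMod M) y) : ∃ k : ℤ, y = k • (M : ZMod N) + x := by
  obtain ⟨a, rfl⟩ := intCast_surjective x
  obtain ⟨b, rfl⟩ := intCast_surjective y
  simp only [map_intCast, intCast_eq_intCast_iff_dvd_sub] at hxy
  obtain ⟨k, hk⟩ := hxy
  exact ⟨k, by rw [zsmul_eq_mul, eq_add_of_sub_eq' hk]; push_cast; ring⟩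

theorem exists_nsmul_eq_prime_pow {p : ℕ} [hp : Fact p.Prime] {j : ℕ} {c : ZMod (p ^ (j + 1))}
    (hc : c ≠ 0) : ∃ n : ℕ, n • c = (p ^ j : ℕ) := by
  have hgcd : c.val.gcd (p ^ (j + 1)) ∣ p ^ j := by
    obtain ⟨i, hi, hgi⟩ := (Nat.dvd_prime_pow hp.out).mp (Nat.gcd_dvd_right c.val (p ^ (j + 1)))
    rcases hi.lt_or_eq with hi | rfl
    · exact hgi ▸ pow_dvd_pow p (Nat.lt_succ_iff.mp hi)
    · have := hgi ▸ Nat.gcd_dvd_left c.val (p ^ (j + 1))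
      exact absurd (Nat.eq_zero_of_dvd_of_lt this (val_lt c)) (val_ne_zero c |>.mpr hc)
  refine ⟨(((p ^ j / c.val.gcd (p ^ (j + 1)) : ℕ) : ZMod _) * c⁻¹).val, ?_⟩
  rw [nsmul_eq_mul, natCast_val, cast_id, mul_assoc, mul_comm c⁻¹, mul_inv_eq_gcd,
    ← Nat.cast_mul, Nat.div_mul_cancel hgcd]

/-! The group `(ZMod N)ᵈᵃᵃ` acts on `ZMod N → ι` by rotation: `(c +ᵥ v) i = v (c + i)`. -/

theorem mk_natCast_mem_stabilizer_iff {ι : Type*} (h : M ∣ N) (v : ZMod N → ι) :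
    DomAddAct.mk (M : ZMod N) ∈ stabilizer (ZMod N)ᵈᵃᵃ v ↔
      ∃ u : ZMod M → ι, u ∘ castHom h (ZMod M) = v := by
  rw [mem_stabilizer_iff]
  constructor
  · intro hv
    refine ⟨v ∘ Function.surjInv (castHom_surjective h), funext fun i => ?_⟩
    obtain ⟨k, hk⟩ := exists_eq_zsmul_add_of_castHom_eq h
      (Function.surjInv_eq (castHom_surjective h) (castHom h (ZMod M) i)).symm
    have := congrFun (zsmul_mem (mem_stabilizer_iff.mpr hv) k) i
    simpa only [DomAddAct.vadd_apply, DomAddAct.symm_mk_zsmul, Equiv.symm_apply_apply,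
      vadd_eq_add, ← hk, Function.comp_apply] using this
  · rintro ⟨u, rfl⟩
    funext i
    simp only [DomAddAct.vadd_apply, Equiv.symm_apply_apply, vadd_eq_add, Function.comp_apply,
      map_add, map_natCast, natCast_self, zero_add]

theorem stabilizer_eq_bot_iff_mk_prime_pow_notMem {ι : Type*} {p : ℕ} [hp : Fact p.Prime]
    {j : ℕ} (v : ZMod (p ^ (j + 1)) → ι) :
    stabilizer (ZMod (p ^ (j + 1)))ᵈᵃᵃ v = ⊥ ↔
      DomAddAct.mk ((p ^ j : ℕ) : ZMod (p ^ (j + 1))) ∉ stabilizer (ZMod (p ^ (j + 1)))ᵈᵃᵃ v := by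
  rw [AddSubgroup.eq_bot_iff_forall]
  constructor
  · intro hbot hmem
    have := congrArg DomAddAct.mk.symm (hbot _ hmem)
    rw [Equiv.symm_apply_apply, DomAddAct.symm_mk_zero, natCast_eq_zero_iff,
      Nat.pow_dvd_pow_iff_le_right hp.out.one_lt] at this
    omega
  · intro hnot c hc
    by_contra hc0
    obtain ⟨n, hn⟩ :=
      exists_nsmul_eq_prime_pow (by rwa [Ne, Equiv.symm_apply_eq, DomAddAct.mk_zero])
    apply hnot
    rw [← hn, ← DomAddAct.symm_mk_nsmul, Equiv.apply_symm_apply]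
    exact nsmul_mem hc n

end ZMod

namespace Matrix

open AddAction

variable {ι R : Type*} [CommSemiring R]

theorem pow_succ_apply_eq_sum_prod [Fintype ι] [DecidableEq ι] (A : Matrix ι ι R) (N : ℕ)
    (a b : ι) :
    (A ^ (N + 1)) a b = ∑ w : Fin N → ι, ∏ i : Fin (N + 1),
      A ((Fin.cons a w : Fin (N + 1) → ι) i) ((Fin.snoc w b : Fin (N + 1) → ι) i) := by
  induction N generalizing a with
  | zero => simp [Fin.snoc]
  | succ N ih =>
    rw [pow_succ', mul_apply, ← (Fin.consEquiv fun _ => ι).sum_comp, Fintype.sum_prod_type]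
    refine sum_congr rfl fun c _ => ?_
    simp only [ih, mul_sum, Fin.consEquiv, Equiv.coe_fn_mk, ← Fin.cons_snoc_eq_snoc_cons,
      Fin.prod_univ_succ (n := N + 1), Fin.cons_zero, Fin.cons_succ]

theorem trace_pow_succ_eq_sum_prod [Fintype ι] [DecidableEq ι] (A : Matrix ι ι R) (N : ℕ) :
    (A ^ (N + 1)).trace = ∑ v : Fin (N + 1) → ι, ∏ i, A (v i) (v (i + 1)) := by
  rw [← (Fin.consEquiv fun _ => ι).sum_comp, Fintype.sum_prod_type]
  refine sum_congr rfl fun a _ => ?_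
  rw [diag_apply, pow_succ_apply_eq_sum_prod]
  refine sum_congr rfl fun w _ => prod_congr rfl fun i _ => ?_
  simp only [Fin.consEquiv, Equiv.coe_fn_mk]
  congr 1
  induction i using Fin.lastCases with
  | last => simp
  | cast i => simp

def closedWalkWeight (A : Matrix ι ι R) {N : ℕ} [NeZero N] (v : ZMod N → ι) : R :=
  ∏ i, A (v i) (v (i + 1))

section ClosedWalk

variable (A : Matrix ι ι R) {N : ℕ}

theorem trace_pow_eq_sum_closedWalkWeight [Fintype ι] [DecidableEq ι] [NeZero N] :
    (A ^ N).trace = ∑ v : ZMod N → ι, A.closedWalkWeight v := by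
  obtain ⟨N, rfl⟩ := Nat.exists_eq_succ_of_ne_zero (NeZero.ne N)
  exact trace_pow_succ_eq_sum_prod A N

theorem closedWalkWeight_vadd [NeZero N] (c : (ZMod N)ᵈᵃᵃ) (v : ZMod N → ι) :
    A.closedWalkWeight (c +ᵥ v) = A.closedWalkWeight v :=
  Fintype.prod_equiv (Equiv.addLeft (DomAddAct.mk.symm c)) _ _ fun i => by
    simp [DomAddAct.vadd_apply, add_assoc]

theorem closedWalkWeight_map_pow [NeZero N] (q : ℕ) (v : ZMod N → ι) :
    (A.map (· ^ q)).closedWalkWeight v = A.closedWalkWeight v ^ q := by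
  simp [closedWalkWeight, prod_pow]

theorem closedWalkWeight_comp_castHom [NeZero N] {M : ℕ} [NeZero M] (h : M ∣ N)
    (u : ZMod M → ι) :
    A.closedWalkWeight (u ∘ ZMod.castHom h (ZMod M)) = A.closedWalkWeight u ^ (N / M) := by
  simp only [closedWalkWeight, Function.comp_apply, map_add, map_one]
  exact ZMod.prod_comp_castHom h fun t => A (u t) (u (t + 1))

open scoped Classical in
theorem trace_pow_prime_pow_succ_eq [Fintype ι] [DecidableEq ι] {p : ℕ} [Fact p.Prime] (j : ℕ) :
    (A ^ p ^ (j + 1)).trace =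
      ∑ v : ZMod (p ^ (j + 1)) → ι with stabilizer (ZMod (p ^ (j + 1)))ᵈᵃᵃ v = ⊥,
        A.closedWalkWeight v + ((A.map (· ^ p)) ^ p ^ j).trace := by
  have h : p ^ j ∣ p ^ (j + 1) := pow_dvd_pow p j.le_succ
  set π := ZMod.castHom h (ZMod (p ^ j))
  rw [trace_pow_eq_sum_closedWalkWeight, ← sum_filter_add_sum_filter_not univ
    (fun v => stabilizer (ZMod (p ^ (j + 1)))ᵈᵃᵃ v = ⊥), trace_pow_eq_sum_closedWalkWeight]
  congr 1
  simp_rw [ZMod.stabilizer_eq_bot_iff_mk_prime_pow_notMem, not_not,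
    ZMod.mk_natCast_mem_stabilizer_iff h]
  have hperiodic : ({v | ∃ u, u ∘ π = v} : Finset (ZMod (p ^ (j + 1)) → ι)) =
      univ.image (· ∘ π) := by
    ext; simp
  rw [hperiodic,
    sum_image fun _ _ _ _ huu' => (ZMod.castHom_surjective h).injective_comp_right huu']
  refine sum_congr rfl fun u _ => ?_
  rw [closedWalkWeight_comp_castHom, closedWalkWeight_map_pow, pow_succ,
    Nat.mul_div_cancel_left _ (Nat.pos_of_neZero _)]

end ClosedWalk

section Integer

variable [Fintype ι] [DecidableEq ι] {p : ℕ} [Fact p.Prime]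

theorem trace_pow_prime_pow_modEq_of_modEq {m : ℤ} (hpm : (p : ℤ) ∣ m) {A C : Matrix ι ι ℤ}
    (hAC : ∀ a b, A a b ≡ C a b [ZMOD m]) (j : ℕ) :
    (A ^ p ^ j).trace ≡ (C ^ p ^ j).trace [ZMOD p ^ j * m] := by
  induction j generalizing m A C with
  | zero =>
    simp only [pow_zero, pow_one, one_mul, trace]
    exact Int.ModEq.sum fun a _ => hAC a a
  | succ j ih =>
    rw [trace_pow_prime_pow_succ_eq A j, trace_pow_prime_pow_succ_eq C j]
    refine Int.ModEq.add (Int.modEq_iff_dvd.mpr ?_) ?_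
    · have hfree := natCard_mul_dvd_sum_of_stabilizer_eq_bot (G := (ZMod (p ^ (j + 1)))ᵈᵃᵃ)
        (F := fun v : ZMod (p ^ (j + 1)) → ι => C.closedWalkWeight v - A.closedWalkWeight v)
        (fun g v => by simp only [closedWalkWeight_vadd]) (d := m)
        fun v _ => (Int.ModEq.prod fun i _ => hAC _ _).dvd
      rwa [Nat.card_congr DomAddAct.mk.symm, Nat.card_zmod, sum_sub_distrib] at hfree
    · have hperiodic := ih (dvd_mul_right _ m) fun a b => (hAC a b).pow_mul_of_dvd hpm
      rwa [← mul_assoc, ← pow_succ] at hperiodic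

theorem trace_pow_prime_pow_succ_modEq (A : Matrix ι ι ℤ) (j : ℕ) :
    (A ^ p ^ (j + 1)).trace ≡ (A ^ p ^ j).trace [ZMOD (p : ℤ) ^ (j + 1)] := by
  have hfree := natCard_mul_dvd_sum_of_stabilizer_eq_bot (G := (ZMod (p ^ (j + 1)))ᵈᵃᵃ)
    (closedWalkWeight_vadd A) (d := 1) fun _ _ => one_dvd _
  rw [Nat.card_congr DomAddAct.mk.symm, Nat.card_zmod, mul_one] at hfree
  have hperiodic := trace_pow_prime_pow_modEq_of_modEq (dvd_refl (p : ℤ)) (A := A.map (· ^ p))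
    (C := A) (fun a b => Int.ModEq.pow_prime_eq_self Fact.out _) j
  rw [trace_pow_prime_pow_succ_eq, ← zero_add (A ^ p ^ j).trace, pow_succ]
  exact (Int.modEq_zero_iff_dvd.mpr (by exact_mod_cast hfree)).add hperiodic

end Integer

end Matrix

theorem stmt_8 (r : ℕ) (f : Matrix (Fin r) (Fin r) ℤ)
    (b : ℕ → ℤ) (hb : ∀ n : ℕ, 1 ≤ n → b n = (f ^ n).trace)
    (n : ℕ) (hn : 1 ≤ n) (p : ℕ) (hp : p.Prime) (hpn : p ∣ n) :
    b n ≡ b (n / p) [ZMOD (p : ℤ) ^ (n.factorization p)] := by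
  have : Fact p.Prime := ⟨hp⟩
  obtain ⟨j, hj⟩ := Nat.exists_eq_add_one.mpr (hp.factorization_pos_of_dvd (by omega) hpn)
  set m := n / p ^ n.factorization p
  have hnm : n = m * p ^ (j + 1) := by
    rw [← hj, mul_comm]
    exact (Nat.ordProj_mul_ordCompl_eq_self n p).symm
  have hnp : n / p = m * p ^ j := by
    rw [hnm, pow_succ, ← mul_assoc, Nat.mul_div_cancel _ hp.pos]
  rw [hb n hn, hb (n / p) (Nat.one_le_div_iff hp.pos |>.mpr (Nat.le_of_dvd hn hpn)), hnp, hj,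
    hnm, pow_mul, pow_mul]
  exact Matrix.trace_pow_prime_pow_succ_modEq (f ^ m) j
end
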